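/- arXiv:1704.00432 — 2 statements merged into one kernel-verified Lean document; each statement's English description precedes it below -/
import Mathlib

section
/- Let b ≥ 2, let p be the smallest prime divisor of b, and let N = A + B where A = Σ_{h=1}^{ℓ} d_h·b^{n_h} and B = Σ_{h=ℓ+1}^{k} d_h·b^{n_h}, with n_1 < ⋯ < n_k natural numbers, n_1 = 0, and all d_h ∈ {1, …, b−1}. Then the p-adic valuation of the rational number B/A satisfies v_p(B/A) ≥ n_{ℓ+1} − (1 + n_ℓ)·(log b)/(log 2). -/
theorem stmt_9 (b p ℓ k : ℕ) (hb : 2 ≤ b) (hp : p = b.minFac)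
    (hℓ : 1 ≤ ℓ) (hℓk : ℓ < k)
    (n : ℕ → ℕ) (hmono : ∀ i, i + 1 < k → n i < n (i + 1)) (h0 : n 0 = 0)
    (d : ℕ → ℕ) (hd : ∀ i < k, 1 ≤ d i ∧ d i ≤ b - 1)
    (A B : ℕ) (hA : A = ∑ h ∈ Finset.range ℓ, d h * b ^ n h)
    (hB : B = ∑ h ∈ Finset.Ico ℓ k, d h * b ^ n h) :
    (n ℓ : ℝ) - (1 + (n (ℓ - 1) : ℝ)) * Real.log b / Real.log 2
      ≤ ((padicValRat p ((B : ℚ) / (A : ℚ))) : ℝ) := by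
  have hp' : p.Prime := hp ▸ Nat.minFac_prime (by omega)
  haveI : Fact p.Prime := ⟨hp'⟩
  have hp2 : 2 ≤ p := hp'.two_le
  have hpb : p ∣ b := hp ▸ Nat.minFac_dvd b
  -- monotonicity
  have hmono' : ∀ j, j < k → ∀ i, i ≤ j → n i ≤ n j := by
    intro j
    induction j with
    | zero =>
      intro _ i hi
      have : i = 0 := by omega
      rw [this]
    | succ m ih =>
      intro hmk i hi
      rcases Nat.eq_or_lt_of_le hi with h | h
      · rw [h]
      · have h1 : n i ≤ n m := ih (by omega) i (by omega)
        have h2 : n m < n (m + 1) := hmono m hmk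
        omega
  -- positivity of A and B
  have haux : ∀ x : ℕ, (b - 1) * x = b * x - x ∧ x ≤ b * x := fun x =>
    ⟨Nat.sub_one_mul b x, Nat.le_mul_of_pos_left x (by omega)⟩
  have hApos : 0 < A := by
    rw [hA]
    have h1 : d 0 * b ^ n 0 ≤ ∑ h ∈ Finset.range ℓ, d h * b ^ n h :=
      Finset.single_le_sum (f := fun h => d h * b ^ n h)
        (fun i _ => Nat.zero_le _) (Finset.mem_range.mpr (by omega))
    have hd0 : 1 ≤ d 0 := (hd 0 (by omega)).1
    have hb0 : 1 ≤ b ^ n 0 := Nat.one_le_pow _ _ (by omega)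
    have h2 : 1 * 1 ≤ d 0 * b ^ n 0 := Nat.mul_le_mul hd0 hb0
    omega
  have hBpos : 0 < B := by
    rw [hB]
    have h1 : d ℓ * b ^ n ℓ ≤ ∑ h ∈ Finset.Ico ℓ k, d h * b ^ n h :=
      Finset.single_le_sum (f := fun h => d h * b ^ n h)
        (fun i _ => Nat.zero_le _) (Finset.mem_Ico.mpr ⟨le_rfl, hℓk⟩)
    have hdl : 1 ≤ d ℓ := (hd ℓ hℓk).1
    have hbl : 1 ≤ b ^ n ℓ := Nat.one_le_pow _ _ (by omega)
    have h2 : 1 * 1 ≤ d ℓ * b ^ n ℓ := Nat.mul_le_mul hdl hbl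
    omega
  -- upper bound on A
  have key : ∀ m, 1 ≤ m → m ≤ ℓ →
      (∑ h ∈ Finset.range m, d h * b ^ n h) + 1 ≤ b ^ (n (m - 1) + 1) := by
    intro m
    induction m with
    | zero => omega
    | succ m ih =>
      intro _ hmℓ
      rcases Nat.eq_zero_or_pos m with rfl | hm1
      · simp only [Nat.zero_add, Finset.sum_range_one, Nat.add_sub_cancel, Nat.sub_self]
        have hd0 := (hd 0 (by omega)).2
        have hb0 : 1 ≤ b ^ n 0 := Nat.one_le_pow _ _ (by omega)
        have : d 0 * b ^ n 0 ≤ (b - 1) * b ^ n 0 :=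
          Nat.mul_le_mul_right _ hd0
        have hpow : b ^ (n 0 + 1) = b * b ^ n 0 := by ring
        have ha := haux (b ^ n 0)
        omega
      · have ihm := ih hm1 (by omega)
        rw [Finset.sum_range_succ]
        have hm1k : (m - 1) + 1 < k := by omega
        have hstep : n (m - 1) < n (m - 1 + 1) := hmono (m - 1) hm1k
        have heq : m - 1 + 1 = m := by omega
        rw [heq] at hstep
        have h1 : b ^ (n (m - 1) + 1) ≤ b ^ n m :=
          Nat.pow_le_pow_right (by omega) (by omega)
        have hdm := (hd m (by omega)).2
        have h2 : d m * b ^ n m ≤ (b - 1) * b ^ n m := Nat.mul_le_mul_right _ hdm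
        have hbm : 1 ≤ b ^ n m := Nat.one_le_pow _ _ (by omega)
        have hpow : b ^ (n (m + 1 - 1) + 1) = b * b ^ n m := by
          rw [Nat.add_sub_cancel]; ring
        rw [hpow]
        have ha := haux (b ^ n m)
        omega
  have hAlt : A < b ^ (n (ℓ - 1) + 1) := by
    have := key ℓ hℓ le_rfl
    omega
  -- valuation bounds
  set vA := padicValNat p A with hvA
  set vB := padicValNat p B with hvB
  have hvAle : 2 ^ vA ≤ A := by
    calc 2 ^ vA ≤ p ^ vA := Nat.pow_le_pow_left hp2 _
      _ ≤ A := Nat.le_of_dvd hApos pow_padicValNat_dvd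
  have hvBge : n ℓ ≤ vB := by
    rw [hvB, ← padicValNat_dvd_iff_le (by omega)]
    have hdvd : b ^ n ℓ ∣ B := by
      rw [hB]
      refine Finset.dvd_sum fun i hi => ?_
      rw [Finset.mem_Ico] at hi
      exact Dvd.dvd.mul_left (pow_dvd_pow b (hmono' i hi.2 ℓ hi.1)) _
    exact dvd_trans (pow_dvd_pow_of_dvd hpb _) hdvd
  -- rewrite the valuation of the quotient
  have hAQ : (A : ℚ) ≠ 0 := by exact_mod_cast hApos.ne'
  have hBQ : (B : ℚ) ≠ 0 := by exact_mod_cast hBpos.ne'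
  have hval : padicValRat p ((B : ℚ) / (A : ℚ)) = (vB : ℤ) - (vA : ℤ) := by
    rw [padicValRat.div hBQ hAQ, padicValRat.of_nat, padicValRat.of_nat]
  rw [hval]
  -- real analysis
  have hlog2 : (0 : ℝ) < Real.log 2 := Real.log_pos (by norm_num)
  have hreal : (vA : ℝ) * Real.log 2 < (1 + (n (ℓ - 1) : ℝ)) * Real.log b := by
    have h2A : (2 : ℝ) ^ vA ≤ (A : ℝ) := by exact_mod_cast hvAle
    have hAb : (A : ℝ) < (b : ℝ) ^ (n (ℓ - 1) + 1) := by exact_mod_cast hAlt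
    have h2pos : (0 : ℝ) < (2 : ℝ) ^ vA := by positivity
    have := Real.log_lt_log h2pos (lt_of_le_of_lt h2A hAb)
    rw [Real.log_pow, Real.log_pow] at this
    push_cast at this ⊢
    linarith
  have hvAlt : (vA : ℝ) < (1 + (n (ℓ - 1) : ℝ)) * Real.log b / Real.log 2 := by
    rw [lt_div_iff₀ hlog2]
    exact hreal
  have hvBge' : (n ℓ : ℝ) ≤ (vB : ℝ) := by exact_mod_cast hvBge
  push_cast
  linarith
end

section
/- Every positive integer n can be written uniquely as a sum F_{n_1} + F_{n_2} + ⋯ + F_{n_k} of Fibonacci numbers, where n_1 ≥ 2 and n_{j} > n_{j-1} + 1 for every j with 2 ≤ j ≤ k (Zeckendorf representation: no two consecutive Fibonacci indices are used and index 0, 1 are excluded). -/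
/-! Mathlib's `Nat.zeckendorf` proves the theorem for lists of indices: every `n` has exactly
one strictly decreasing list `l` with gaps at least 2 and last entry at least 2 such that
`(l.map fib).sum = n`. Sorting a finite index set in decreasing order gives such a list exactly
when the set avoids indices `0, 1` and pairs of consecutive indices, and sorting is injective. -/

open List Nat

theorem List.isZeckendorfRep_iff {l : List ℕ} :
    l.IsZeckendorfRep ↔ l.Pairwise (fun a b ↦ b + 2 ≤ a) ∧ ∀ a ∈ l, 2 ≤ a := by
  have : IsTrans ℕ fun a b ↦ b + 2 ≤ a := ⟨fun _ _ _ hab hbc ↦ by omega⟩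
  simp [IsZeckendorfRep, isChain_iff_pairwise, pairwise_append]

namespace Finset

theorem pairwise_sort_add_two_le_iff {s : Finset ℕ} :
    (s.sort (· ≥ ·)).Pairwise (fun a b ↦ b + 2 ≤ a) ↔ ∀ i ∈ s, i + 1 ∉ s := by
  constructor
  · intro h i hi hi1
    have : Std.Symm fun a b : ℕ ↦ b + 2 ≤ a ∨ a + 2 ≤ b := ⟨fun _ _ ↦ Or.symm⟩
    have hsep : (s.sort (· ≥ ·)).Pairwise fun a b ↦ b + 2 ≤ a ∨ a + 2 ≤ b := h.imp Or.inl
    have := hsep.forall (mem_sort _ |>.2 hi) (mem_sort _ |>.2 hi1) (by omega)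
    omega
  · intro h
    refine (sortedGT_sort s).pairwise.imp_of_mem fun {a b} ha hb hab ↦ ?_
    rw [mem_sort] at ha hb
    by_contra hlt
    exact h b hb (by rwa [show b + 1 = a by omega])

theorem isZeckendorfRep_sort_iff {s : Finset ℕ} :
    (s.sort (· ≥ ·)).IsZeckendorfRep ↔ (∀ i ∈ s, 2 ≤ i) ∧ ∀ i ∈ s, i + 1 ∉ s := by
  simp only [isZeckendorfRep_iff, pairwise_sort_add_two_le_iff, mem_sort, and_comm]

theorem sum_eq_sum_map_sort {M : Type*} [AddCommMonoid M] {α : Type*} (r : α → α → Prop)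
    [DecidableRel r] [IsTrans α r] [Std.Antisymm r] [Std.Total r] (s : Finset α) (f : α → M) :
    ∑ i ∈ s, f i = ((s.sort r).map f).sum := by
  rw [sum_eq_multiset_sum, ← sort_eq s r, Multiset.map_coe, Multiset.sum_coe]

end Finset

theorem List.IsZeckendorfRep.sort_toFinset {l : List ℕ} (hl : l.IsZeckendorfRep) :
    l.toFinset.sort (· ≥ ·) = l := by
  have hgt : l.Pairwise (· > ·) := (isZeckendorfRep_iff.1 hl).1.imp (by omega)
  exact (toFinset_sort _ (hgt.imp ne_of_gt)).2 (hgt.imp le_of_lt)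

theorem Nat.zeckendorf_sum_fib_finset {s : Finset ℕ} (h2 : ∀ i ∈ s, 2 ≤ i)
    (hs : ∀ i ∈ s, i + 1 ∉ s) : zeckendorf (∑ i ∈ s, fib i) = s.sort (· ≥ ·) := by
  rw [Finset.sum_eq_sum_map_sort (· ≥ ·)]
  exact zeckendorf_sum_fib (Finset.isZeckendorfRep_sort_iff.2 ⟨h2, hs⟩)

theorem stmt_18_general (n : ℕ) :
    ∃! s : Finset ℕ, (∀ i ∈ s, 2 ≤ i) ∧ (∀ i ∈ s, i + 1 ∉ s) ∧
      ∑ i ∈ s, Nat.fib i = n := by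
  have hz := isZeckendorfRep_zeckendorf n
  refine ⟨(zeckendorf n).toFinset, and_assoc.1 ⟨?_, ?_⟩, fun s ⟨h2, hs, hsum⟩ ↦ ?_⟩
  · rw [← Finset.isZeckendorfRep_sort_iff, hz.sort_toFinset]
    exact hz
  · rw [Finset.sum_eq_sum_map_sort (· ≥ ·), hz.sort_toFinset, sum_zeckendorf_fib]
  · rw [← hsum, zeckendorf_sum_fib_finset h2 hs, Finset.sort_toFinset]

theorem stmt_18 (n : ℕ) (hn : 1 ≤ n) :
    ∃! s : Finset ℕ, (∀ i ∈ s, 2 ≤ i) ∧ (∀ i ∈ s, i + 1 ∉ s) ∧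
      ∑ i ∈ s, Nat.fib i = n :=
  stmt_18_general n
end
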